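/- arXiv:1704.01295 — 2 statements merged into one kernel-verified Lean document; each statement's English description precedes it below -/
import Mathlib

section
/- For positive integers n, i ≥ 0, and any integer ℓ with 1 ≤ ℓ ≤ n, the sum ∑_{k=ℓ}^{n} k · C(n-k+i, i) · (n+i+1)^{k-ℓ} · n^{n-k+i} equals C(n-ℓ+i+1, i+1) · n^{n-ℓ+i+1}. -/
/-!
Write `S(l)` for the sum. Splitting off its bottom term gives
`S(l) = l·C(n-l+i, i)·n^(n-l+i) + (n+i+1)·S(l+1)`, and the closed form follows by downward
induction on `l`, starting from `S(n) = n·n^i`. The induction step is the identity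
`l·C(m, i) + (n+i+1)·C(m, i+1) = C(m+1, i+1)·n` for `m = n-l+i`, which is Pascal's rule
(the part linear in `l`) together with `(m+1)·C(m, i+1) = (n-l)·C(m+1, i+1)`.
-/

open Finset

def kloeveSum (n i l : ℕ) : ℕ :=
  ∑ k ∈ Icc l n, k * (n - k + i).choose i * (n + i + 1) ^ (k - l) * n ^ (n - k + i)

lemma add_mul_choose_add_mul_choose (d i l : ℕ) :
    l * (d + i + 1).choose i + (l + d + i + 2) * (d + i + 1).choose (i + 1)
      = (d + i + 2).choose (i + 1) * (l + d + 1) := by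
  have pascal : (d + i + 2).choose (i + 1) = (d + i + 1).choose i + (d + i + 1).choose (i + 1) :=
    Nat.choose_succ_succ' (d + i + 1) i
  have absorb : (d + i + 1).choose (i + 1) * (d + i + 2) = (d + i + 2).choose (i + 1) * (d + 1) := by
    simpa [show d + i + 1 + 1 - (i + 1) = d + 1 by omega] using
      Nat.choose_mul_succ_eq (d + i + 1) (i + 1)
  rw [pascal] at absorb ⊢
  linear_combination absorb

lemma kloeveSum_eq_add_mul_kloeveSum_succ {n l : ℕ} (i : ℕ) (hl : l ≤ n) :
    kloeveSum n i l
      = l * (n - l + i).choose i * n ^ (n - l + i) + (n + i + 1) * kloeveSum n i (l + 1) := by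
  rw [kloeveSum, kloeveSum, ← insert_Icc_add_one_left_eq_Icc hl, sum_insert (by simp), mul_sum]
  congr 1
  · simp
  refine sum_congr rfl fun k hk => ?_
  rw [show k - l = k - (l + 1) + 1 by grind, pow_succ]
  ring

lemma kloeveSum_add_self (i l d : ℕ) :
    kloeveSum (l + d) i l = (d + i + 1).choose (i + 1) * (l + d) ^ (d + i + 1) := by
  induction d generalizing l with
  | zero => simp [kloeveSum, pow_succ, mul_comm]
  | succ d ih =>
    rw [kloeveSum_eq_add_mul_kloeveSum_succ i (by omega), show l + (d + 1) = l + 1 + d by ring,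
      ih (l + 1), show l + 1 + d - l = d + 1 by omega]
    calc l * (d + 1 + i).choose i * (l + 1 + d) ^ (d + 1 + i)
          + (l + 1 + d + i + 1) * ((d + i + 1).choose (i + 1) * (l + 1 + d) ^ (d + i + 1))
        = (l * (d + i + 1).choose i + (l + d + i + 2) * (d + i + 1).choose (i + 1))
            * (l + d + 1) ^ (d + i + 1) := by ring_nf
      _ = (d + 1 + i + 1).choose (i + 1) * (l + 1 + d) ^ (d + 1 + i + 1) := by
        rw [add_mul_choose_add_mul_choose]
        ring_nf

theorem kloeve_binom_sum_general (n i l : ℕ) (hln : l ≤ n) :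
    ∑ k ∈ Finset.Icc l n,
        k * Nat.choose (n - k + i) i * (n + i + 1) ^ (k - l) * n ^ (n - k + i)
      = Nat.choose (n - l + i + 1) (i + 1) * n ^ (n - l + i + 1) := by
  obtain ⟨d, rfl⟩ := Nat.exists_eq_add_of_le hln
  simpa [kloeveSum] using kloeveSum_add_self i l d

theorem kloeve_binom_sum (n i l : ℕ) (hn : 0 < n) (hl1 : 1 ≤ l) (hln : l ≤ n) :
    ∑ k ∈ Finset.Icc l n,
        k * Nat.choose (n - k + i) i * (n + i + 1) ^ (k - l) * n ^ (n - k + i)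
      = Nat.choose (n - l + i + 1) (i + 1) * n ^ (n - l + i + 1) :=
  kloeve_binom_sum_general n i l hln
end

section
/- Let d be a positive integer and x a real number. With Ω_d defined as in the context, the coefficient identity Ω_d(x+1) = ∑_{m=0}^{d} C(d,m)·(d-m+1)^d·x^m holds. -/
/-!
Splitting every entry `x + 1` into its summands `x` and `1` gives `Ω_d(x + 1) = ∑_t x^|t| N(t)`,
where `t` is the set of rows taking the summand `x` and `N(t)` counts injective `ρ` with
`ρ i < β_t i` for distinct bounds `β_t i` (`d - i` on `t`, `d + 1 + i` off `t`). Filling the rows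
in increasing order of their bounds gives `N(t) = ∏ i, (β_t i - #{j | β_t j < β_t i})`, and each
factor equals `q + #{j ∈ t | j < i} - [i ∈ t] i` with `q = d - |t| + 1`. Summed over `|t| = m`,
this product is `C(d, m) q^d` for every `q`: splitting on whether the last row lies in `t` gives
Pascal's recursion.
-/

open Classical in
/-- The permanent-type sum `Ω_d(x)` of the `d × 2d` matrix `A_{d,x}`
(rows and columns here are 0-indexed: row `i`, column `j` correspond to
row `i+1`, column `j+1` of the paper, so the entry is `x` if `i+j+1 ≤ d`,
`1` if `d ≤ i+j` and `j ≤ d+i`, and `0` otherwise). The sum is over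
injective sequences `ρ` with `ρ i ≤ d + i` (0-indexed form of `1 ≤ ρ_i ≤ d+i`). -/
noncomputable def Omega (d : ℕ) (x : ℝ) : ℝ :=
  ∑ ρ ∈ Finset.univ.filter (fun ρ : Fin d → Fin (2 * d) =>
      Function.Injective ρ ∧ ∀ i : Fin d, (ρ i : ℕ) ≤ d + (i : ℕ)),
    ∏ i : Fin d,
      (if (i : ℕ) + (ρ i : ℕ) < d then x
       else if (ρ i : ℕ) ≤ d + (i : ℕ) then 1 else 0)

open Finset Function

theorem Fin.insertNth_injective_iff {α : Type*} {n : ℕ} {p : Fin (n + 1)} {x : α} {f : Fin n → α} :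
    Injective (p.insertNth x f) ↔ x ∉ Set.range f ∧ Injective f := by
  simp only [Injective, Fin.forall_iff_succAbove p, Fin.insertNth_apply_same,
    Fin.insertNth_apply_succAbove, Set.mem_range, not_exists]
  grind [Fin.succAbove_ne, Fin.succAbove_right_inj]

theorem Fin.card_filter_univ_succAbove {n : ℕ} (p : Fin (n + 1)) (P : Fin (n + 1) → Prop)
    [DecidablePred P] (hp : ¬ P p) : #{i | P i} = #{i : Fin n | P (p.succAbove i)} := by
  rw [Fin.univ_succAbove n p, filter_cons_of_neg _ _ _ _ hp, filter_map, card_map]; rfl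

theorem card_filter_val_lt_notMem_range {N n b : ℕ} (hb : b ≤ N) {g : Fin n → Fin N}
    (hg : Injective g) (hgb : ∀ j, g j < b) : #{v : Fin N | v < b ∧ v ∉ Set.range g} = b - n := by
  have hsub : univ.image g ⊆ univ.filter fun v : Fin N => v < b := by
    intro v hv
    obtain ⟨j, -, rfl⟩ := mem_image.mp hv
    simpa using hgb j
  have hset : #{v : Fin N | v < b ∧ v ∉ Set.range g}
      = #((univ.filter fun v : Fin N => v < b) \ univ.image g) := by
    congr 1
    ext v; simp
  rw [hset, card_sdiff_of_subset hsub, Fin.card_filter_val_lt, card_image_of_injective _ hg,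
    card_univ, Fintype.card_fin, min_eq_right hb]

theorem card_filter_lt_apply_le {ι : Type*} [Fintype ι] {β : ι → ℕ} (hβ : Injective β) (i : ι) :
    #{j | β j < β i} ≤ β i := by
  calc #{j | β j < β i} = #(image β {j | β j < β i}) := (card_image_of_injective _ hβ).symm
    _ ≤ #(range (β i)) := card_le_card fun b hb => by
      obtain ⟨j, hj, rfl⟩ := mem_image.mp hb
      exact mem_range.mpr (mem_filter.mp hj).2
    _ = β i := card_range _

theorem card_injective_lt_bounds {N : ℕ} :
    ∀ {n : ℕ} (β : Fin n → ℕ), Injective β → (∀ i, β i ≤ N) →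
      #{f : Fin n → Fin N | Injective f ∧ ∀ i, f i < β i} = ∏ i, (β i - #{j | β j < β i})
  | 0, β, _, _ => by simp [injective_of_subsingleton]
  | n + 1, β, hβ, hN => by
    -- The row `p` with the largest bound has `β p - n` free values, whatever the others take.
    obtain ⟨p, hp⟩ := Finite.exists_max β
    have hlt (j : Fin n) : β (p.succAbove j) < β p :=
      (hp _).lt_of_ne (hβ.ne (p.succAbove_ne j))
    have hcount : #{f : Fin (n + 1) → Fin N | Injective f ∧ ∀ i, f i < β i}
        = #{g : Fin n → Fin N | Injective g ∧ ∀ j, g j < β (p.succAbove j)} * (β p - n) := by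
      simp only [card_eq_sum_ones, sum_filter]
      rw [← (Fin.insertNthEquiv (fun _ => Fin N) p).sum_comp, Fintype.sum_prod_type_right,
        sum_mul]
      refine sum_congr rfl fun g _ => ?_
      have hsplit (v : Fin N) : (Injective (p.insertNth (α := fun _ => Fin N) v g) ∧
            ∀ i, (p.insertNth (α := fun _ => Fin N) v g i : ℕ) < β i) ↔
          (v < β p ∧ v ∉ Set.range g) ∧ Injective g ∧ ∀ j, g j < β (p.succAbove j) := by
        rw [Fin.insertNth_injective_iff, Fin.forall_iff_succAbove p, Fin.insertNth_apply_same]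
        simp only [Fin.insertNth_apply_succAbove]
        tauto
      simp only [Fin.insertNthEquiv, Equiv.coe_fn_mk, hsplit]
      by_cases hg : Injective g ∧ ∀ j, g j < β (p.succAbove j)
      · rw [if_pos hg, one_mul, ← card_filter_val_lt_notMem_range (hN p) hg.1
          fun j => (hg.2 j).trans (hlt j), card_eq_sum_ones, sum_filter]
        simp [hg]
      · rw [if_neg hg, zero_mul]
        exact sum_eq_zero fun v _ => if_neg fun h => hg h.2
    have hbelow_p : #{j | β j < β p} = n := by
      rw [Fin.card_filter_univ_succAbove p (fun j => β j < β p) (lt_irrefl _),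
        filter_true_of_mem fun j _ => hlt j, card_univ, Fintype.card_fin]
    have hbelow (j : Fin n) : #{k | β k < β (p.succAbove j)}
        = #{k : Fin n | β (p.succAbove k) < β (p.succAbove j)} :=
      Fin.card_filter_univ_succAbove p (fun k => β k < β (p.succAbove j)) (hlt j).not_gt
    rw [hcount, card_injective_lt_bounds (fun j => β (p.succAbove j))
        (hβ.comp Fin.succAbove_right_injective) fun j => hN _,
      Fin.prod_univ_succAbove _ p, hbelow_p, mul_comm]
    simp only [hbelow]

/-- For `S = t.map Fin.valEmbedding` and `q = d - #t + 1` this is the factor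
`β i - #{j | β j < β i}` of row `i` for the bounds `β = rowBound d t`. -/
def rankWeight (q : ℤ) (S : Finset ℕ) (i : ℕ) : ℤ :=
  q + #{j ∈ S | j < i} - if i ∈ S then (i : ℤ) else 0

section rankWeight

variable (q : ℤ) {S : Finset ℕ} {n : ℕ}

theorem rankWeight_of_subset_range (hS : S ⊆ range n) : rankWeight q S n = q + #S := by
  have hfilter : {j ∈ S | j < n} = S := filter_true_of_mem fun j hj => mem_range.mp (hS hj)
  have hn : n ∉ S := fun h => lt_irrefl n (mem_range.mp (hS h))
  simp [rankWeight, hfilter, hn]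

theorem rankWeight_insert_self (hS : S ⊆ range n) : rankWeight q (insert n S) n = q + #S - n := by
  have hfilter : {j ∈ insert n S | j < n} = S := by
    rw [filter_insert, if_neg (lt_irrefl n)]
    exact filter_true_of_mem fun j hj => mem_range.mp (hS hj)
  simp [rankWeight, hfilter]

theorem rankWeight_insert_of_lt {i : ℕ} (hi : i < n) :
    rankWeight q (insert n S) i = rankWeight q S i := by
  simp [rankWeight, filter_insert, hi.ne, hi.not_gt]

theorem sum_powersetCard_prod_rankWeight_succ (m : ℕ) :
    ∑ S ∈ (range (n + 1)).powersetCard (m + 1), ∏ i ∈ range (n + 1), rankWeight q S i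
      = (q + (m + 1)) * ∑ S ∈ (range n).powersetCard (m + 1), ∏ i ∈ range n, rankWeight q S i
        + (q + m - n) * ∑ S ∈ (range n).powersetCard m, ∏ i ∈ range n, rankWeight q S i := by
  have hn : n ∉ range n := notMem_range_self
  have hinsert : Set.InjOn (insert n) ((range n).powersetCard m : Set (Finset ℕ)) :=
    fun S hS T hT h => by
      rw [mem_coe, mem_powersetCard] at hS hT
      rw [← erase_insert (fun h => hn (hS.1 h)), h, erase_insert (fun h => hn (hT.1 h))]
  have hdisj : Disjoint ((range n).powersetCard (m + 1))
      (((range n).powersetCard m).image (insert n)) := by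
    refine disjoint_left.mpr fun S hS hS' => ?_
    obtain ⟨T, -, rfl⟩ := mem_image.mp hS'
    exact hn ((mem_powersetCard.mp hS).1 (mem_insert_self n T))
  rw [range_add_one, powersetCard_succ_insert hn, sum_union hdisj, sum_image hinsert,
    mul_sum, mul_sum]
  congr 1
  · refine sum_congr rfl fun S hS => ?_
    obtain ⟨hSn, hcard⟩ := mem_powersetCard.mp hS
    rw [prod_insert hn, rankWeight_of_subset_range q hSn, hcard]
    push_cast; ring
  · refine sum_congr rfl fun S hS => ?_
    obtain ⟨hSn, hcard⟩ := mem_powersetCard.mp hS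
    rw [prod_insert hn, rankWeight_insert_self q hSn, hcard,
      prod_congr rfl fun i hi => rankWeight_insert_of_lt q (mem_range.mp hi)]

end rankWeight

theorem cast_choose_succ_mul_eq (n m : ℕ) :
    ((n.choose (m + 1) : ℕ) : ℤ) * (m + 1) = (n.choose m) * ((n : ℤ) - m) := by
  rcases le_or_gt m n with h | h
  · rw [← Nat.cast_sub h]
    exact_mod_cast Nat.choose_succ_right_eq n m
  · simp [Nat.choose_eq_zero_of_lt h, Nat.choose_eq_zero_of_lt (h.trans (Nat.lt_succ_self m))]

theorem sum_powersetCard_prod_rankWeight (q : ℤ) : ∀ n m : ℕ,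
    ∑ S ∈ (range n).powersetCard m, ∏ i ∈ range n, rankWeight q S i = n.choose m * q ^ n
  | n, 0 => by simp [rankWeight]
  | 0, m + 1 => by simp
  | n + 1, m + 1 => by
    rw [sum_powersetCard_prod_rankWeight_succ, sum_powersetCard_prod_rankWeight q n,
      sum_powersetCard_prod_rankWeight q n, Nat.choose_succ_succ', Nat.cast_add]
    linear_combination q ^ n * cast_choose_succ_mul_eq n m

/-- Rows in `t` take the `x` of their `x + 1` entries, which confines them to the columns
`ρ i < d - i`; the other rows may use any column `ρ i ≤ d + i`. -/
def rowBound (d : ℕ) (t : Finset (Fin d)) (i : Fin d) : ℕ :=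
  if i ∈ t then d - (i : ℕ) else d + 1 + (i : ℕ)

section rowBound

variable {d : ℕ} (t : Finset (Fin d))

theorem rowBound_injective : Injective (rowBound d t) := by
  intro i j h
  unfold rowBound at h
  split_ifs at h <;> omega

theorem rowBound_le (i : Fin d) : rowBound d t i ≤ 2 * d := by
  unfold rowBound; split_ifs <;> omega

theorem card_rowBound_lt_of_mem {i : Fin d} (hi : i ∈ t) :
    #{j | rowBound d t j < rowBound d t i} + #{j ∈ t | j < i} + 1 = #t := by
  have hset : ({j | rowBound d t j < rowBound d t i} : Finset _) = {j ∈ t | i < j} := by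
    ext j
    have := j.isLt; have := i.isLt
    by_cases hj : j ∈ t <;>
      simp only [rowBound, mem_filter, mem_univ, true_and, false_and, hi, hj, if_true, if_false,
        Fin.lt_def, iff_false, not_lt] <;> omega
  have hge : {j ∈ t | ¬ j < i} = insert i {j ∈ t | i < j} := by
    ext j
    simp only [mem_filter, mem_insert, not_lt]
    constructor
    · rintro ⟨hj, hij⟩
      exact hij.eq_or_lt.imp Eq.symm fun h => ⟨hj, h⟩
    · rintro (rfl | ⟨hj, hij⟩)
      exacts [⟨hi, le_rfl⟩, ⟨hj, hij.le⟩]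
  have hsplit := card_filter_add_card_filter_not (s := t) (p := (· < i))
  rw [hge, card_insert_of_notMem (by simp)] at hsplit
  rw [hset]
  omega

theorem card_rowBound_lt_of_notMem {i : Fin d} (hi : i ∉ t) :
    #{j | rowBound d t j < rowBound d t i} + #{j ∈ t | j < i} = #t + i := by
  have hset : ({j | rowBound d t j < rowBound d t i} : Finset _) = t ∪ Iio i := by
    ext j
    have := j.isLt; have := i.isLt
    by_cases hj : j ∈ t <;>
      simp only [rowBound, mem_filter, mem_univ, true_and, true_or, false_or, hi, hj, if_true,
        if_false, mem_union, mem_Iio, Fin.lt_def, iff_true] <;> omega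
  have hinter : t ∩ Iio i = {j ∈ t | j < i} := by ext j; simp
  rw [hset, ← hinter, card_union_add_card_inter, Fin.card_Iio]

theorem rowBound_sub_card_lt_eq_rankWeight (i : Fin d) :
    ((rowBound d t i - #{j | rowBound d t j < rowBound d t i} : ℕ) : ℤ)
      = rankWeight ((d : ℤ) - #t + 1) (t.map Fin.valEmbedding) i := by
  have hle := card_filter_lt_apply_le (rowBound_injective t) i
  have hcount : #{j ∈ t.map Fin.valEmbedding | j < (i : ℕ)} = #{j ∈ t | j < i} := by
    rw [filter_map, card_map]; rfl
  rw [Nat.cast_sub hle, rankWeight, hcount]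
  have hmem : (i : ℕ) ∈ t.map Fin.valEmbedding ↔ i ∈ t := mem_map' Fin.valEmbedding
  have hi_lt := i.isLt
  by_cases hi : i ∈ t
  · have := card_rowBound_lt_of_mem t hi
    simp only [rowBound, hi, hmem, if_true] at this hle ⊢
    omega
  · have := card_rowBound_lt_of_notMem t hi
    simp only [rowBound, hi, hmem, if_false] at this hle ⊢
    omega

theorem lt_rowBound_iff (i : Fin d) (c : ℕ) :
    c < rowBound d t i ↔ c ≤ d + i ∧ (i ∈ t → i + c < d) := by
  unfold rowBound; split_ifs <;> simp_all <;> omega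

end rowBound

theorem sum_card_injective_lt_rowBound (d m : ℕ) :
    ∑ t ∈ (univ : Finset (Fin d)).powersetCard m,
      (#{ρ : Fin d → Fin (2 * d) | Injective ρ ∧ ∀ i, ρ i < rowBound d t i} : ℤ)
      = d.choose m * ((d : ℤ) - m + 1) ^ d := by
  calc _ = ∑ t ∈ (univ : Finset (Fin d)).powersetCard m,
        ∏ i : Fin d, rankWeight ((d : ℤ) - m + 1) (t.map Fin.valEmbedding) i := by
        refine sum_congr rfl fun t ht => ?_
        rw [card_injective_lt_bounds _ (rowBound_injective t) (rowBound_le t), Nat.cast_prod,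
          ← (mem_powersetCard.mp ht).2]
        exact prod_congr rfl fun i _ => rowBound_sub_card_lt_eq_rankWeight t i
    _ = ∑ S ∈ (range d).powersetCard m, ∏ i ∈ range d, rankWeight ((d : ℤ) - m + 1) S i := by
        rw [← Nat.Iio_eq_range, ← Fin.map_valEmbedding_univ, powersetCard_map, sum_map,
          Fin.map_valEmbedding_univ, Nat.Iio_eq_range]
        exact sum_congr rfl fun t _ => Fin.prod_univ_eq_prod_range _ d
    _ = _ := sum_powersetCard_prod_rankWeight _ d m

theorem omega_add_one_eq_sum (d : ℕ) (x : ℝ) :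
    Omega d (x + 1) = ∑ t ∈ (univ : Finset (Fin d)).powerset,
      (#{ρ : Fin d → Fin (2 * d) | Injective ρ ∧ ∀ i, ρ i < rowBound d t i} : ℝ) * x ^ #t := by
  set R : Finset (Fin d → Fin (2 * d)) := {ρ | Injective ρ ∧ ∀ i, (ρ i : ℕ) ≤ d + i}
  calc Omega d (x + 1)
      = ∑ ρ ∈ R, ∑ t ∈ (univ : Finset (Fin d)).powerset,
          if ∀ i ∈ t, (i : ℕ) + ρ i < d then x ^ #t else 0 := by
        refine sum_congr rfl fun ρ hρ => ?_
        have hle := (mem_filter.mp hρ).2.2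
        have hentry (i : Fin d) :
            (if (i : ℕ) + ρ i < d then x + 1 else if (ρ i : ℕ) ≤ d + i then 1 else 0)
              = (if (i : ℕ) + ρ i < d then x else 0) + 1 := by
          split_ifs <;> simp_all
        rw [prod_congr rfl fun i _ => hentry i, prod_add_one]
        exact sum_congr rfl fun t _ => by rw [prod_ite_zero, prod_const]; congr
    _ = ∑ t ∈ (univ : Finset (Fin d)).powerset, ∑ ρ ∈ R,
          if ∀ i ∈ t, (i : ℕ) + ρ i < d then x ^ #t else 0 := sum_comm
    _ = _ := by
        refine sum_congr rfl fun t _ => ?_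
        rw [← sum_filter, sum_const, filter_filter, nsmul_eq_mul]
        congr 3
        refine filter_congr fun ρ _ => ?_
        simp only [lt_rowBound_iff, forall_and]
        tauto

theorem kloeve_shifted_general (d : ℕ) (x : ℝ) :
    Omega d (x + 1) = ∑ m ∈ Finset.range (d + 1),
      (Nat.choose d m : ℝ) * ((d : ℝ) - (m : ℝ) + 1) ^ d * x ^ m := by
  rw [omega_add_one_eq_sum, sum_powerset, card_univ, Fintype.card_fin]
  refine sum_congr rfl fun m _ => ?_
  rw [sum_congr rfl fun t ht => by rw [(mem_powersetCard.mp ht).2], ← sum_mul]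
  congr 1
  exact_mod_cast sum_card_injective_lt_rowBound d m

theorem kloeve_shifted (d : ℕ) (hd : 0 < d) (x : ℝ) :
    Omega d (x + 1) = ∑ m ∈ Finset.range (d + 1),
      (Nat.choose d m : ℝ) * ((d : ℝ) - (m : ℝ) + 1) ^ d * x ^ m :=
  kloeve_shifted_general d x
end
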